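/- Let v₁ = (0,0,0), v₂ = (1000,0,0), v₃ = (259,671,0), v₄ = (588,−242,241), v₅ = (−54,149,−419), v₆ = (534,66,386), v₇ = (718,9,−596), v₈ = (350,695,32), v₉ = (−23,−222,−111), v₁₀ = (−70,338,−938) in ℝ³, and define edge vectors eᵢ = v_{i+1} − vᵢ for i = 1, …, 9 and e₁₀ = v₁ − v₁₀. Then there is no w ∈ ℝ³ such that (−1)^{i+1} (w · eᵢ) > 0 for every i ∈ {1, …, 10}. -/

import Mathlib

/-! A positive linear combination of the signed edges `(-1)^i • eᵢ` vanishes already for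
`i ∈ {0, 2, 5, 9}` (the paper's `e₁, e₃, e₆, e₁₀`): the kernel of the `3 × 4` matrix of these
vectors is spanned by a vector with positive entries. Pairing with `w` would then make a
positive sum equal to `0`. -/

/-- The vertices of the paper's 10-stick polygonal realization of the knot `9_20`.
Here `vert9_20 i` is the paper's vertex `v_(i+1)`. -/
noncomputable def vert9_20 : Fin 10 → (Fin 3 → ℝ) :=
  ![![0, 0, 0], ![1000, 0, 0], ![259, 671, 0], ![588, -242, 241], ![-54, 149, -419], ![534, 66, 386], ![718, 9, -596], ![350, 695, 32], ![-23, -222, -111], ![-70, 338, -938]]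

/-- The edge vectors `eᵢ = v_(i+1) − vᵢ` (cyclically, so `e₁₀ = v₁ − v₁₀`);
here `edge9_20 i` is the paper's `e_(i+1)`, using wrap-around addition on `Fin 10`. -/
noncomputable def edge9_20 (i : Fin 10) : Fin 3 → ℝ :=
  vert9_20 (i + 1) - vert9_20 i

theorem not_forall_pos_dotProduct_of_sum_smul_eq_zero {R ι n : Type*} [CommRing R] [LinearOrder R]
    [IsStrictOrderedRing R] [Fintype n] {u : ι → n → R} {s : Finset ι} {c : ι → R}
    (hsum : ∑ i ∈ s, c i • u i = 0) (hs : s.Nonempty) (hc : ∀ i ∈ s, 0 < c i) (w : n → R) :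
    ¬ ∀ i ∈ s, 0 < w ⬝ᵥ u i := by
  intro hw
  have hpos : 0 < ∑ i ∈ s, c i * (w ⬝ᵥ u i) :=
    Finset.sum_pos (fun i hi => mul_pos (hc i hi) (hw i hi)) hs
  have hzero : ∑ i ∈ s, c i * (w ⬝ᵥ u i) = 0 := by
    simp only [← smul_eq_mul, ← dotProduct_smul, ← dotProduct_sum, hsum, dotProduct_zero]
  exact hpos.ne' hzero

theorem sum_smul_alternating_edge9_20_eq_zero :
    ∑ i ∈ ({0, 2, 5, 9} : Finset (Fin 10)),
      (![19879689, 0, 96345500, 0, 0, 193734000, 0, 0, 0, 227575750] : Fin 10 → ℝ) i •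
        ((-1 : ℝ) ^ (i : ℕ) • edge9_20 i) = 0 := by
  ext j
  fin_cases j <;> simp [edge9_20, vert9_20] <;> norm_num

/-- There is no `w ∈ ℝ³` such that `(−1)^(i+1) (w · eᵢ) > 0` for every
`i ∈ {1, …, 10}`: no projection of this polygon (the knot `9_20`) to a line has
5 local maxima. (With 0-based indexing `i : Fin 10`, the sign is `(−1)^i`.) -/
theorem no_alternating_direction_9_20 :
    ¬ ∃ w : Fin 3 → ℝ, ∀ i : Fin 10,
        0 < (-1 : ℝ) ^ (i : ℕ) * ∑ j : Fin 3, w j * edge9_20 i j := by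
  rintro ⟨w, hw⟩
  refine not_forall_pos_dotProduct_of_sum_smul_eq_zero sum_smul_alternating_edge9_20_eq_zero
    (Finset.insert_nonempty _ _) (fun i hi => ?_) w fun i _ => ?_
  · fin_cases hi <;> simp
  · rw [dotProduct_smul, smul_eq_mul]
    exact hw i
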